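/- Suppose D(n,k,3) ≥ ξ for positive integers n > k ≥ 3 and ξ ≥ 0. Then there exists a multigraph G on n vertices such that: (i) 2|E(G)| = n(n−1)(n−2) − k(k−1)(k−2)ξ; (ii) every vertex x satisfies deg_G(x) ≡ (n−1)(n−2) (mod (k−1)(k−2)); (iii) every pair of distinct vertices x,y satisfies m_G(xy) ≡ n−2 (mod k−2); and (iv) G admits a decomposition into pairwise distinct triangles (a set of distinct 3-subsets of V(G) such that each pair {x,y} lies in exactly m_G(xy) of them). -/

import Mathlib

/-- The packing number D(n,k,t): the maximum number of k-subsets of an n-set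
such that every t-subset is contained in at most one of them. -/
noncomputable def packingNumber (n k t : ℕ) : ℕ :=
  sSup {m | ∃ B : Finset (Finset (Fin n)),
    (∀ b ∈ B, b.card = k) ∧
    (∀ T : Finset (Fin n), T.card = t → (B.filter (fun b => T ⊆ b)).card ≤ 1) ∧
    B.card = m}

/-- A distinct K3-decomposition of a multigraph with multiplicity function m. -/
def IsTriangleDecomp {V : Type*} [DecidableEq V] (m : V → V → ℕ)
    (C : Finset (Finset V)) : Prop :=
  (∀ T ∈ C, T.card = 3) ∧
  ∀ x y : V, x ≠ y → (C.filter (fun T => x ∈ T ∧ y ∈ T)).card = m x y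


/-!
Take ξ blocks of a 3-(n,k,1) packing and let G be the multigraph whose triangles are the
3-subsets of the vertex set that lie in no block. Through a pair {x, y} pass n - 2 triples; the
triples inside blocks through x, y are counted by the third points, and since two blocks share
at most two points these third-point sets are disjoint, so exactly (k - 2) λ(x, y) of the triples
are covered, where λ(x, y) is the number of blocks through x and y. Hence
m(x, y) + (k - 2) λ(x, y) = n - 2, and summing over y (resp. over x and y) with the double counts
∑_y λ(x, y) = (k - 1) r(x) and ∑_x r(x) = k ξ, where r(x) is the number of blocks through x,
gives the degree and edge counts.
-/

open Finset

def IsPacking {α : Type*} [DecidableEq α] (t : ℕ) (B : Finset (Finset α)) : Prop :=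
  ∀ T : Finset α, #T = t → #{b ∈ B | T ⊆ b} ≤ 1

lemma IsPacking.mono {α : Type*} [DecidableEq α] {t : ℕ} {B B' : Finset (Finset α)}
    (hB : IsPacking t B) (hB' : B' ⊆ B) : IsPacking t B' :=
  fun T hT => (card_le_card (filter_subset_filter _ hB')).trans (hB T hT)

lemma exists_isPacking_card_eq_of_le_packingNumber {n k t ξ : ℕ}
    (h : ξ ≤ packingNumber n k t) :
    ∃ B : Finset (Finset (Fin n)), (∀ b ∈ B, #b = k) ∧ IsPacking t B ∧ #B = ξ := by
  let S := {m | ∃ B : Finset (Finset (Fin n)), (∀ b ∈ B, #b = k) ∧ IsPacking t B ∧ #B = m}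
  have hne : S.Nonempty := ⟨0, ∅, by simp [IsPacking]⟩
  have hbdd : BddAbove S := ⟨_, by rintro m ⟨B, -, -, rfl⟩; exact card_le_univ B⟩
  obtain ⟨B, hBk, hB, hBcard⟩ := Nat.sSup_mem hne hbdd
  obtain ⟨B', hB'B, rfl⟩ := exists_subset_card_eq (hBcard.symm ▸ h : ξ ≤ #B)
  exact ⟨B', fun b hb => hBk b (hB'B hb), hB.mono hB'B, rfl⟩

lemma sum_card_filter_mem_eq_sum_card_inter {α : Type*} [DecidableEq α] (s : Finset α)
    (B : Finset (Finset α)) : ∑ a ∈ s, #{b ∈ B | a ∈ b} = ∑ b ∈ B, #(s ∩ b) := by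
  simp_rw [← filter_mem_eq_inter, card_eq_sum_ones, sum_filter]
  exact sum_comm

section TriplePacking

variable {α : Type*} [DecidableEq α] {B : Finset (Finset α)} {k : ℕ} {x y : α}

variable (B) in
def pairDegree (x y : α) : ℕ := #{b ∈ B | x ∈ b ∧ y ∈ b}

lemma pairwiseDisjoint_sdiff_pair (hB : IsPacking 3 B) (hxy : x ≠ y) :
    (({b ∈ B | x ∈ b ∧ y ∈ b} : Finset (Finset α)) : Set (Finset α)).PairwiseDisjoint
      (· \ {x, y}) := by
  intro b₁ hb₁ b₂ hb₂ hne
  simp only [coe_filter, Set.mem_ofPred_eq] at hb₁ hb₂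
  refine disjoint_left.2 fun z hz₁ hz₂ => hne ?_
  simp only [mem_sdiff, mem_insert, mem_singleton, not_or] at hz₁ hz₂
  have hxyz : #({x, y, z} : Finset α) = 3 := by
    rw [card_insert_of_notMem (by simp [hxy, Ne.symm hz₁.2.1]), card_pair (Ne.symm hz₁.2.2)]
  refine card_le_one.1 (hB _ hxyz) b₁ ?_ b₂ ?_ <;> simp [insert_subset_iff, *]

lemma card_biUnion_sdiff_pair (hBk : ∀ b ∈ B, #b = k) (hB : IsPacking 3 B) (hxy : x ≠ y) :
    #({b ∈ B | x ∈ b ∧ y ∈ b}.biUnion (· \ {x, y})) = (k - 2) * pairDegree B x y := by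
  rw [card_biUnion (pairwiseDisjoint_sdiff_pair hB hxy), sum_const_nat fun b hb => ?_, pairDegree,
    mul_comm]
  obtain ⟨hbB, hx, hy⟩ := mem_filter.1 hb
  rw [card_sdiff_of_subset (by simp [insert_subset_iff, hx, hy]), hBk b hbB, card_pair hxy]

variable [Fintype α]

lemma filter_powersetCard_three_mem_mem (hxy : x ≠ y) :
    {T ∈ powersetCard 3 (univ : Finset α) | x ∈ T ∧ y ∈ T} =
      ({x, y}ᶜ : Finset α).image (fun z => ({x, y, z} : Finset α)) := by
  ext T
  simp only [mem_filter, mem_powersetCard, subset_univ, true_and, mem_image]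
  constructor
  · rintro ⟨hT, hx, hy⟩
    have hxyT : {x, y} ⊆ T := by simp [insert_subset_iff, hx, hy]
    obtain ⟨z, hz⟩ : ∃ z, T \ {x, y} = {z} := card_eq_one.mp <| by
      rw [card_sdiff_of_subset hxyT, hT, card_pair hxy]
    refine ⟨z, ?_, ?_⟩
    · simpa using (mem_sdiff.1 (hz ▸ mem_singleton_self z : z ∈ T \ {x, y})).2
    · rw [← union_sdiff_of_subset hxyT, hz]
      ext
      simp
  · rintro ⟨z, hz, rfl⟩
    simp only [mem_compl, mem_insert, mem_singleton, not_or] at hz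
    refine ⟨?_, by simp, by simp⟩
    rw [card_insert_of_notMem (by simp [hxy, Ne.symm hz.1]), card_pair (Ne.symm hz.2)]

lemma card_filter_powersetCard_three_mem_mem (hxy : x ≠ y) (p : Finset α → Prop)
    [DecidablePred p] :
    #{T ∈ powersetCard 3 (univ : Finset α) | p T ∧ x ∈ T ∧ y ∈ T} =
      #{z ∈ ({x, y}ᶜ : Finset α) | p {x, y, z}} := by
  rw [← filter_filter, filter_comm, filter_powersetCard_three_mem_mem hxy, filter_image]
  refine card_image_of_injOn fun z₁ hz₁ z₂ _ h => ?_
  have : z₁ ∈ ({x, y, z₂} : Finset α) := h ▸ by simp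
  simp only [coe_filter, Set.mem_ofPred_eq, mem_compl, mem_insert, mem_singleton,
    not_or] at this hz₁
  tauto

variable (B) in
def uncoveredTriples : Finset (Finset α) :=
  {T ∈ powersetCard 3 univ | ¬ ∃ b ∈ B, T ⊆ b}

variable (B) in
def uncoveredMult (x y : α) : ℕ :=
  if x = y then 0 else #{T ∈ uncoveredTriples B | x ∈ T ∧ y ∈ T}

lemma uncoveredMult_comm (x y : α) : uncoveredMult B x y = uncoveredMult B y x := by
  unfold uncoveredMult
  simp only [eq_comm (a := x), and_comm (a := x ∈ _)]

lemma uncoveredMult_self (x : α) : uncoveredMult B x x = 0 := if_pos rfl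

lemma isTriangleDecomp_uncoveredTriples :
    IsTriangleDecomp (uncoveredMult B) (uncoveredTriples B) := by
  refine ⟨fun T hT => (mem_powersetCard.1 (mem_filter.1 hT).1).2, fun x y hxy => ?_⟩
  rw [uncoveredMult, if_neg hxy]

lemma uncoveredMult_eq_card (hxy : x ≠ y) :
    uncoveredMult B x y = #{z ∈ ({x, y}ᶜ : Finset α) | ¬ ∃ b ∈ B, {x, y, z} ⊆ b} := by
  rw [uncoveredMult, if_neg hxy, uncoveredTriples, filter_filter,
    card_filter_powersetCard_three_mem_mem hxy]

lemma filter_exists_subset_eq_biUnion_sdiff_pair :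
    {z ∈ ({x, y}ᶜ : Finset α) | ∃ b ∈ B, {x, y, z} ⊆ b} =
      {b ∈ B | x ∈ b ∧ y ∈ b}.biUnion (· \ {x, y}) := by
  ext z
  simp only [mem_filter, mem_compl, mem_biUnion, mem_sdiff, insert_subset_iff,
    singleton_subset_iff]
  tauto

lemma uncoveredMult_add_pairDegree (hBk : ∀ b ∈ B, #b = k) (hB : IsPacking 3 B)
    (hxy : x ≠ y) : uncoveredMult B x y + (k - 2) * pairDegree B x y = Fintype.card α - 2 := by
  rw [uncoveredMult_eq_card hxy, ← card_biUnion_sdiff_pair hBk hB hxy,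
    ← filter_exists_subset_eq_biUnion_sdiff_pair, add_comm, card_filter_add_card_filter_not,
    card_compl, card_pair hxy]

lemma sum_pairDegree (hBk : ∀ b ∈ B, #b = k) (x : α) :
    ∑ y ∈ univ.erase x, pairDegree B x y = (k - 1) * #{b ∈ B | x ∈ b} := by
  simp_rw [pairDegree, ← filter_filter]
  rw [sum_card_filter_mem_eq_sum_card_inter, sum_const_nat fun b hb => ?_, mul_comm]
  obtain ⟨hbB, hx⟩ := mem_filter.1 hb
  rw [erase_inter, univ_inter, card_erase_of_mem hx, hBk b hbB]

lemma sum_uncoveredMult_add_mul_card_filter_mem (hBk : ∀ b ∈ B, #b = k) (hB : IsPacking 3 B)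
    (x : α) :
    ∑ y, uncoveredMult B x y + (k - 1) * (k - 2) * #{b ∈ B | x ∈ b} =
      (Fintype.card α - 1) * (Fintype.card α - 2) :=
  calc
    _ = ∑ y ∈ univ.erase x, (uncoveredMult B x y + (k - 2) * pairDegree B x y) := by
      rw [← sum_erase univ (uncoveredMult_self x), sum_add_distrib, ← mul_sum,
        sum_pairDegree hBk]
      ring
    _ = ∑ y ∈ univ.erase x, (Fintype.card α - 2) :=
      sum_congr rfl fun y hy => uncoveredMult_add_pairDegree hBk hB (ne_of_mem_erase hy).symm
    _ = _ := by rw [sum_const, card_erase_of_mem (mem_univ x), card_univ, smul_eq_mul]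

lemma sum_card_filter_mem (hBk : ∀ b ∈ B, #b = k) : ∑ x, #{b ∈ B | x ∈ b} = k * #B := by
  rw [sum_card_filter_mem_eq_sum_card_inter,
    sum_const_nat fun b hb => by rw [univ_inter, hBk b hb], mul_comm]

end TriplePacking

theorem stmt6_general (n k ξ : ℕ)
    (h : ξ ≤ packingNumber n k 3) :
    ∃ m : Fin n → Fin n → ℕ,
      (∀ x y, m x y = m y x) ∧ (∀ x, m x x = 0) ∧
      (∑ x, ∑ y, m x y) + k * (k - 1) * (k - 2) * ξ = n * (n - 1) * (n - 2) ∧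
      (∀ x, (∑ y, m x y) ≡ (n - 1) * (n - 2) [MOD (k - 1) * (k - 2)]) ∧
      (∀ x y, x ≠ y → m x y ≡ n - 2 [MOD k - 2]) ∧
      ∃ C : Finset (Finset (Fin n)), IsTriangleDecomp m C := by
  obtain ⟨B, hBk, hB, rfl⟩ := exists_isPacking_card_eq_of_le_packingNumber h
  have hdeg := sum_uncoveredMult_add_mul_card_filter_mem hBk hB
  simp only [Fintype.card_fin] at hdeg
  refine ⟨uncoveredMult B, uncoveredMult_comm, uncoveredMult_self, ?_, fun x => ?_,
    fun x y hxy => ?_, _, isTriangleDecomp_uncoveredTriples⟩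
  · have htotal := sum_congr rfl fun x (_ : x ∈ univ) => hdeg x
    rw [sum_add_distrib, ← mul_sum, sum_card_filter_mem hBk, sum_const, card_univ,
      Fintype.card_fin, smul_eq_mul] at htotal
    linarith
  · rw [← hdeg x]
    exact Nat.modEq_add_modulus_mul_iff.2 rfl
  · have hpair := uncoveredMult_add_pairDegree hBk hB hxy
    rw [Fintype.card_fin] at hpair
    rw [← hpair]
    exact Nat.modEq_add_modulus_mul_iff.2 rfl

theorem stmt6 (n k ξ : ℕ) (hk : 3 ≤ k) (hkn : k < n)
    (h : ξ ≤ packingNumber n k 3) :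
    ∃ m : Fin n → Fin n → ℕ,
      (∀ x y, m x y = m y x) ∧ (∀ x, m x x = 0) ∧
      (∑ x, ∑ y, m x y) + k * (k - 1) * (k - 2) * ξ = n * (n - 1) * (n - 2) ∧
      (∀ x, (∑ y, m x y) ≡ (n - 1) * (n - 2) [MOD (k - 1) * (k - 2)]) ∧
      (∀ x y, x ≠ y → m x y ≡ n - 2 [MOD k - 2]) ∧
      ∃ C : Finset (Finset (Fin n)), IsTriangleDecomp m C :=
  stmt6_general n k ξ h
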